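/- For every integer n ≥ 1 and all real numbers c > 0, r > 0, the sum over all histories h ∈ H_n of [Γ(s(h))Γ(c+nr)/Γ(c+nr+s(h))] · ∏_{j=1}^n (r)_{h(j)}/h(j)! converges and equals ψ(c+nr) − ψ(c). -/

import Mathlib

open scoped BigOperators

/-- Rising factorial `(a)_z = a(a+1)⋯(a+z-1)`. -/
noncomputable def risingFac (a : ℝ) (z : ℕ) : ℝ := ∏ i ∈ Finset.range z, (a + i)

/-- Digamma function `ψ(x) = Γ'(x)/Γ(x)`. -/
noncomputable def psi (x : ℝ) : ℝ := deriv Real.Gamma x / Real.Gamma x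

/-- The set of histories `H_n`: length-`n` tuples of non-negative integers, not all zero. -/
def Hist (n : ℕ) : Type := {h : Fin n → ℕ // h ≠ 0}

/-- `s(h) = ∑_j h(j)`. -/
def histSum {n : ℕ} (h : Fin n → ℕ) : ℕ := ∑ j, h j

/-- The weight `Γ(s(h))Γ(c+nr)/Γ(c+nr+s(h)) · ∏_j (r)_{h(j)}/h(j)!` of a history `h`. -/
noncomputable def histWeight (n : ℕ) (c r : ℝ) (h : Fin n → ℕ) : ℝ :=
  Real.Gamma (histSum h) * Real.Gamma (c + n * r) / Real.Gamma (c + n * r + histSum h) *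
    ∏ j, risingFac r (h j) / (h j).factorial

/-!
Grouping the histories by `s(h) = k`, the Vandermonde identity for rising factorials (equivalently
`((1 - X)^(-r))^n = (1 - X)^(-nr)` for power series) sums the products `∏ⱼ (r)_{h(j)}/h(j)!` over
the fibre to `(nr)_k/k!`. With `a = nr` and `b = c + a` the series becomes
`∑_{k ≥ 1} (a)_k / (k (b)_k)`. Both it and `ψ(b) - ψ(c) = ∑ₘ (1/(c+m) - 1/(b+m))` are the two
iterated sums of the nonnegative double series `(a)_{k+1} / (b+m)_{k+2}`, each of which telescopes.
The series for `ψ(b) - ψ(c)` itself telescopes by `ψ(x+1) = ψ(x) + 1/x`, with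
`ψ(b+N) - ψ(c+N) → 0` since `ψ` is increasing (`log Γ` is convex).
-/

open Filter Finset Topology

lemma risingFac_succ (x : ℝ) (k : ℕ) : risingFac x (k + 1) = risingFac x k * (x + k) :=
  prod_range_succ _ _

lemma risingFac_one (x : ℝ) : risingFac x 1 = x := by
  simp [risingFac]

lemma risingFac_succ_left (x : ℝ) (k : ℕ) : risingFac x (k + 1) = x * risingFac (x + 1) k := by
  rw [risingFac, prod_range_succ', mul_comm, risingFac, Nat.cast_zero, add_zero]
  congr 1
  refine prod_congr rfl fun i _ => ?_
  push_cast
  ring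

lemma risingFac_pos {x : ℝ} (hx : 0 < x) (k : ℕ) : 0 < risingFac x k :=
  prod_pos fun i _ => by positivity

lemma le_risingFac_succ {x : ℝ} (hx : 0 ≤ x) (k : ℕ) : x ≤ risingFac x (k + 1) := by
  rw [risingFac_succ_left]
  exact le_mul_of_one_le_right hx (one_le_prod fun i _ => by linarith [i.cast_nonneg (α := ℝ)])

lemma risingFac_eq_ascPochhammer_eval (x : ℝ) (k : ℕ) :
    risingFac x k = (ascPochhammer ℝ k).eval x := by
  induction k with
  | zero => simp [risingFac]
  | succ k ih => rw [risingFac_succ, ih, ascPochhammer_succ_eval]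

lemma Real.Gamma_add_nat {x : ℝ} (hx : 0 < x) (k : ℕ) :
    Real.Gamma (x + k) = risingFac x k * Real.Gamma x := by
  induction k with
  | zero => simp [risingFac]
  | succ k ih =>
    rw [Nat.cast_succ, ← add_assoc, Real.Gamma_add_one (by positivity : 0 < x + k).ne', ih,
      risingFac_succ]
    ring

lemma Real.GammaSeq_eq_div_risingFac (s : ℝ) (k : ℕ) :
    Real.GammaSeq s k = (k : ℝ) ^ s * k.factorial / risingFac s (k + 1) :=
  rfl

lemma tendsto_risingFac_div_risingFac {a x : ℝ} (ha : 0 < a) (hax : a < x) :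
    Tendsto (fun k => risingFac a (k + 1) / risingFac x (k + 1)) atTop (𝓝 0) := by
  have hpow : Tendsto (fun k : ℕ => (k : ℝ) ^ (a - x)) atTop (𝓝 0) := by
    simpa [Function.comp_def] using
      (tendsto_rpow_neg_atTop (sub_pos.2 hax)).comp tendsto_natCast_atTop_atTop
  -- Euler's limit formula: `(s)_{k+1} ≈ k^s k! / Γ(s)`, so the ratio is `≈ k^(a-x) Γ(x)/Γ(a)`.
  have hlim := ((Real.GammaSeq_tendsto_Gamma x).div (Real.GammaSeq_tendsto_Gamma a)
    (Real.Gamma_pos_of_pos ha).ne').mul hpow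
  rw [mul_zero] at hlim
  refine hlim.congr' ?_
  filter_upwards [eventually_gt_atTop 0] with k hk
  have hk : (0 : ℝ) < k := Nat.cast_pos.2 hk
  have := risingFac_pos (ha.trans hax) (k + 1)
  rw [Pi.div_apply, Real.GammaSeq_eq_div_risingFac, Real.GammaSeq_eq_div_risingFac,
    Real.rpow_sub hk]
  field_simp

lemma multichoose_eq_risingFac_div (x : ℝ) (k : ℕ) :
    Ring.multichoose x k = risingFac x k / k.factorial := by
  rw [eq_div_iff (by positivity), mul_comm, ← nsmul_eq_mul,
    Ring.factorial_nsmul_multichoose_eq_ascPochhammer, Polynomial.ascPochhammer_smeval_eq_eval,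
    risingFac_eq_ascPochhammer_eval]

lemma choose_neg_eq_risingFac (x : ℝ) (k : ℕ) :
    Ring.choose (-x) k = (-1) ^ k * (risingFac x k / k.factorial) := by
  rw [Ring.choose_neg', multichoose_eq_risingFac_div, Units.smul_def, zsmul_eq_mul,
    Int.cast_negOnePow_natCast]

/-- The power series `(1 - X)^(-x)`. -/
noncomputable def risingSeries (x : ℝ) : PowerSeries ℝ :=
  PowerSeries.mk fun k => risingFac x k / k.factorial

lemma risingSeries_eq_rescale_binomialSeries (x : ℝ) :
    risingSeries x = PowerSeries.rescale (-1) (PowerSeries.binomialSeries ℝ (-x)) := by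
  ext k
  simp [risingSeries, PowerSeries.coeff_rescale, choose_neg_eq_risingFac, ← mul_assoc,
    ← mul_pow]

lemma risingSeries_add (x y : ℝ) : risingSeries (x + y) = risingSeries x * risingSeries y := by
  simp only [risingSeries_eq_rescale_binomialSeries, neg_add, PowerSeries.binomialSeries_add,
    map_mul]

lemma risingSeries_natCast_mul (n : ℕ) (x : ℝ) : risingSeries (n * x) = risingSeries x ^ n := by
  induction n with
  | zero => simp [risingSeries_eq_rescale_binomialSeries]
  | succ n ih => rw [pow_succ, ← ih, ← risingSeries_add]; push_cast; ring_nf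

lemma sum_antidiagonalTuple_prod_risingFac (n k : ℕ) (x : ℝ) :
    ∑ h ∈ Nat.antidiagonalTuple n k, ∏ j, risingFac x (h j) / (h j).factorial =
      risingFac (n * x) k / k.factorial := by
  classical
  rw [← PowerSeries.coeff_mk k (fun k => risingFac (n * x) k / k.factorial), ← risingSeries,
    risingSeries_natCast_mul, ← Fin.prod_const, PowerSeries.coeff_prod]
  refine (sum_equiv Finsupp.equivFunOnFinite (fun l => ?_) (fun l _ => ?_)).symm
  · simp [Nat.mem_antidiagonalTuple]
  · simp [risingSeries]

lemma psi_eq_deriv_log_Gamma {x : ℝ} (hx : 0 < x) :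
    psi x = deriv (Real.log ∘ Real.Gamma) x := by
  rw [Function.comp_def, deriv.log (Real.differentiableOn_Gamma_Ioi.differentiableAt
    (Ioi_mem_nhds hx)) (Real.Gamma_pos_of_pos hx).ne', psi]

lemma differentiableAt_log_Gamma {x : ℝ} (hx : 0 < x) :
    DifferentiableAt ℝ (Real.log ∘ Real.Gamma) x :=
  (Real.differentiableOn_Gamma_Ioi.differentiableAt (Ioi_mem_nhds hx)).log
    (Real.Gamma_pos_of_pos hx).ne'

lemma psi_add_one {x : ℝ} (hx : 0 < x) : psi (x + 1) = psi x + 1 / x := by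
  rw [psi_eq_deriv_log_Gamma (by positivity), psi_eq_deriv_log_Gamma hx, ← deriv_comp_add_const,
    one_div, ← Real.deriv_log, ← deriv_add (differentiableAt_log_Gamma hx)
    (Real.differentiableAt_log hx.ne')]
  refine EventuallyEq.deriv_eq ?_
  filter_upwards [eventually_gt_nhds hx] with y hy
  simp only [Function.comp_apply, Real.Gamma_add_one hy.ne',
    Real.log_mul hy.ne' (Real.Gamma_pos_of_pos hy).ne', Pi.add_apply, add_comm]

lemma psi_add_nat {x : ℝ} (hx : 0 < x) (N : ℕ) :
    psi (x + N) = psi x + ∑ m ∈ range N, 1 / (x + m) := by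
  induction N with
  | zero => simp
  | succ N ih =>
    rw [Nat.cast_succ, ← add_assoc, psi_add_one (by positivity), ih, sum_range_succ, add_assoc]

lemma monotoneOn_psi : MonotoneOn psi (Set.Ioi 0) :=
  (Real.convexOn_log_Gamma.monotoneOn_deriv fun _ hx => differentiableAt_log_Gamma hx).congr
    fun _ hx => (psi_eq_deriv_log_Gamma hx).symm

lemma tendsto_psi_add_nat_sub_psi_add_nat {b c : ℝ} (hc : 0 < c) (hcb : c ≤ b) :
    Tendsto (fun N : ℕ => psi (b + N) - psi (c + N)) atTop (𝓝 0) := by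
  have hb : 0 < b := hc.trans_le hcb
  set K := ⌈b - c⌉₊
  have hsum : Tendsto (fun N : ℕ => ∑ m ∈ range K, 1 / (c + N + m)) atTop (𝓝 0) := by
    simpa using tendsto_finsetSum (range K) fun m _ =>
      tendsto_const_nhds (x := (1 : ℝ)).div_atTop (tendsto_atTop_add_const_right _ (m : ℝ)
        (tendsto_atTop_add_const_left _ c tendsto_natCast_atTop_atTop))
  refine tendsto_of_tendsto_of_tendsto_of_le_of_le tendsto_const_nhds hsum (fun N => ?_)
    (fun N => ?_)
  · exact sub_nonneg.2 (monotoneOn_psi (Set.mem_Ioi.2 (by positivity))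
      (Set.mem_Ioi.2 (by positivity)) (by linarith))
  · have hle : b + N ≤ c + N + K := by linarith [Nat.le_ceil (b - c)]
    have := monotoneOn_psi (Set.mem_Ioi.2 (by positivity)) (Set.mem_Ioi.2 (by positivity)) hle
    rw [psi_add_nat (x := c + N) (by positivity) K] at this
    simp only
    linarith

lemma hasSum_of_eq_sub_succ {u f : ℕ → ℝ} {l : ℝ} (hu : ∀ n, 0 ≤ u n)
    (huf : ∀ n, u n = f n - f (n + 1)) (hf : Tendsto f atTop (𝓝 l)) : HasSum u (f 0 - l) := by
  rw [hasSum_iff_tendsto_nat_of_nonneg hu]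
  simp_rw [huf, sum_range_sub']
  exact tendsto_const_nhds.sub hf

lemma hasSum_one_div_add_sub_one_div_add {b c : ℝ} (hc : 0 < c) (hcb : c ≤ b) :
    HasSum (fun m : ℕ => 1 / (c + m) - 1 / (b + m)) (psi b - psi c) := by
  have hb : 0 < b := hc.trans_le hcb
  have h := hasSum_of_eq_sub_succ (u := fun m : ℕ => 1 / (c + m) - 1 / (b + m))
    (f := fun m : ℕ => psi (b + m) - psi (c + m))
    (fun m => sub_nonneg.2 (one_div_le_one_div_of_le (by positivity) (by linarith)))
    (fun m => ?_) (tendsto_psi_add_nat_sub_psi_add_nat hc hcb)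
  · simpa using h
  · simp only [Nat.cast_succ, ← add_assoc, psi_add_one (by positivity : 0 < b + m),
      psi_add_one (by positivity : 0 < c + m)]
    ring

lemma hasSum_sigma_of_nonneg {α : Type*} {β : α → Type*} {f : (Σ a, β a) → ℝ}
    {g : α → ℝ} {S : ℝ} (hf : 0 ≤ f) (hfg : ∀ a, HasSum (fun b => f ⟨a, b⟩) (g a))
    (hg : HasSum g S) : HasSum f S := by
  have hsum : Summable f := (summable_sigma_of_nonneg hf).2
    ⟨fun a => (hfg a).summable, by simpa only [fun a => (hfg a).tsum_eq] using hg.summable⟩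
  exact (hsum.hasSum.sigma hfg).unique hg ▸ hsum.hasSum

lemma hasSum_fiberwise_swap_of_nonneg {α β : Type*} {f : α × β → ℝ} {u : α → ℝ} {v : β → ℝ}
    {S : ℝ} (hf : 0 ≤ f) (hu : ∀ a, HasSum (fun b => f (a, b)) (u a))
    (hv : ∀ b, HasSum (fun a => f (a, b)) (v b)) (hS : HasSum u S) : HasSum v S := by
  have hfS : HasSum f S := (Equiv.sigmaEquivProd α β).hasSum_iff.1
    (hasSum_sigma_of_nonneg (fun _ => hf _) hu hS)
  exact ((Equiv.prodComm β α).hasSum_iff.2 hfS).prod_fiberwise hv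

lemma one_div_risingFac_eq_sub {y : ℝ} (hy : 0 < y) (k : ℕ) :
    1 / risingFac y (k + 2) =
      1 / ((k + 1) * risingFac y (k + 1)) - 1 / ((k + 1) * risingFac (y + 1) (k + 1)) := by
  have hP := risingFac_pos (by positivity : 0 < y + 1) k
  rw [risingFac_succ_left y (k + 1), risingFac_succ (y + 1) k, risingFac_succ_left y k]
  field_simp
  ring

lemma hasSum_one_div_risingFac_add_nat {b : ℝ} (hb : 0 < b) (k : ℕ) :
    HasSum (fun m : ℕ => 1 / risingFac (b + m) (k + 2))
      (1 / ((k + 1) * risingFac b (k + 1))) := by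
  have hR : Tendsto (fun m : ℕ => risingFac (b + m) (k + 1)) atTop atTop :=
    tendsto_atTop_mono (fun m => le_risingFac_succ (by positivity) k)
      (tendsto_atTop_add_const_left _ b tendsto_natCast_atTop_atTop)
  have hf : Tendsto (fun m : ℕ => 1 / ((k + 1) * risingFac (b + m) (k + 1))) atTop (𝓝 0) :=
    tendsto_const_nhds.div_atTop (hR.const_mul_atTop (by positivity))
  have h := hasSum_of_eq_sub_succ (u := fun m : ℕ => 1 / risingFac (b + m) (k + 2))
    (fun m => (one_div_pos.2 (risingFac_pos (by positivity) _)).le)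
    (fun m => by rw [one_div_risingFac_eq_sub (by positivity), Nat.cast_succ, add_assoc]) hf
  simpa using h

lemma risingFac_div_risingFac_eq_sub {a x : ℝ} (hx : 0 < x) (hax : a < x) (k : ℕ) :
    risingFac a (k + 1) / risingFac x (k + 2) =
      risingFac a (k + 1) / ((x - a) * risingFac x (k + 1)) -
        risingFac a (k + 2) / ((x - a) * risingFac x (k + 2)) := by
  have hR := risingFac_pos hx (k + 1)
  have hxa : 0 < x - a := sub_pos.2 hax
  rw [show k + 2 = k + 1 + 1 from rfl, risingFac_succ a (k + 1), risingFac_succ x (k + 1)]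
  have : 0 < x + (k + 1 : ℕ) := by positivity
  field_simp
  push_cast
  ring

lemma hasSum_risingFac_div_risingFac {a x : ℝ} (ha : 0 < a) (hax : a < x) :
    HasSum (fun k => risingFac a (k + 1) / risingFac x (k + 2)) (1 / (x - a) - 1 / x) := by
  have hx : 0 < x := ha.trans hax
  have hxa : 0 < x - a := sub_pos.2 hax
  have hf : Tendsto (fun k => risingFac a (k + 1) / ((x - a) * risingFac x (k + 1))) atTop
      (𝓝 0) := by
    simpa [div_div, mul_comm (x - a)] using
      (tendsto_risingFac_div_risingFac ha hax).div_const (x - a)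
  have h := hasSum_of_eq_sub_succ (u := fun k => risingFac a (k + 1) / risingFac x (k + 2))
    (f := fun k => risingFac a (k + 1) / ((x - a) * risingFac x (k + 1)))
    (fun k => (div_pos (risingFac_pos ha _) (risingFac_pos hx _)).le)
    (fun k => risingFac_div_risingFac_eq_sub hx hax k) hf
  convert h using 1
  rw [zero_add, risingFac_one, risingFac_one, sub_zero]
  field_simp
  ring

lemma hasSum_risingFac_div_mul_risingFac {a c : ℝ} (ha : 0 < a) (hc : 0 < c) :
    HasSum (fun k => risingFac a (k + 1) / ((k + 1) * risingFac (c + a) (k + 1)))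
      (psi (c + a) - psi c) := by
  refine hasSum_fiberwise_swap_of_nonneg
    (f := fun p : ℕ × ℕ => risingFac a (p.2 + 1) / risingFac (c + a + p.1) (p.2 + 2))
    (fun p => (div_pos (risingFac_pos ha _) (risingFac_pos (by positivity) _)).le)
    (fun m => ?_) (fun k => ?_) (hasSum_one_div_add_sub_one_div_add hc (by linarith))
  · simpa [add_right_comm c a] using
      hasSum_risingFac_div_risingFac ha
        (by linarith [(m.cast_nonneg : (0 : ℝ) ≤ m)] : a < c + a + m)
  · simpa [div_eq_mul_one_div (risingFac a (k + 1))] using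
      (hasSum_one_div_risingFac_add_nat (by positivity : 0 < c + a) k).mul_left
        (risingFac a (k + 1))

lemma histWeight_nonneg (n : ℕ) {c r : ℝ} (hc : 0 < c) (hr : 0 ≤ r) (h : Fin n → ℕ) :
    0 ≤ histWeight n c r h := by
  have hb : 0 < c + n * r := by positivity
  have := Real.Gamma_pos_of_pos hb
  have := Real.Gamma_pos_of_pos (by positivity : 0 < c + n * r + histSum h)
  have := Real.Gamma_nonneg_of_nonneg (histSum h).cast_nonneg
  have : 0 ≤ ∏ j, risingFac r (h j) / (h j).factorial :=
    prod_nonneg fun j _ => div_nonneg (prod_nonneg fun i _ => by positivity) (by positivity)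
  unfold histWeight
  positivity

-- Mathlib's junk value `Γ(0) = 0` kills the weight of the zero history.
lemma histWeight_zero (n : ℕ) (c r : ℝ) : histWeight n c r 0 = 0 := by
  simp [histWeight, histSum]

lemma sum_histWeight_antidiagonalTuple (n k : ℕ) (c r : ℝ) :
    ∑ h ∈ Nat.antidiagonalTuple n k, histWeight n c r h =
      Real.Gamma k * Real.Gamma (c + n * r) / Real.Gamma (c + n * r + k) *
        (risingFac (n * r) k / k.factorial) := by
  rw [← sum_antidiagonalTuple_prod_risingFac, mul_sum]
  refine sum_congr rfl fun h hh => ?_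
  rw [histWeight, show histSum h = k from Nat.mem_antidiagonalTuple.1 hh]

lemma Gamma_mul_Gamma_div_Gamma_mul_risingFac {a b : ℝ} (hb : 0 < b) (k : ℕ) :
    Real.Gamma (k + 1 : ℕ) * Real.Gamma b / Real.Gamma (b + (k + 1 : ℕ)) *
        (risingFac a (k + 1) / (k + 1).factorial) =
      risingFac a (k + 1) / ((k + 1) * risingFac b (k + 1)) := by
  have := Real.Gamma_pos_of_pos hb
  have := risingFac_pos hb (k + 1)
  rw [Real.Gamma_add_nat hb, Nat.cast_succ, Real.Gamma_nat_eq_factorial, Nat.factorial_succ]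
  push_cast
  field_simp

theorem stmt_10 (n : ℕ) (hn : 1 ≤ n) (c r : ℝ) (hc : 0 < c) (hr : 0 < r) :
    HasSum (fun h : Hist n => histWeight n c r h.1) (psi (c + n * r) - psi c) := by
  have ha : 0 < n * r := mul_pos (by exact_mod_cast hn) hr
  have hshift : HasSum (fun k => ∑ h ∈ Nat.antidiagonalTuple n (k + 1), histWeight n c r h)
      (psi (c + n * r) - psi c) := by
    convert hasSum_risingFac_div_mul_risingFac ha hc using 2 with k
    rw [sum_histWeight_antidiagonalTuple,
      Gamma_mul_Gamma_div_Gamma_mul_risingFac (by positivity : 0 < c + n * r)]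
  have hfib : HasSum (fun k => ∑ h ∈ Nat.antidiagonalTuple n k, histWeight n c r h)
      (psi (c + n * r) - psi c) := by
    have h := (hasSum_nat_add_iff
      (f := fun k => ∑ h ∈ Nat.antidiagonalTuple n k, histWeight n c r h) 1).1 hshift
    rwa [sum_range_one, Nat.antidiagonalTuple_zero_right, sum_singleton, histWeight_zero,
      add_zero] at h
  have hall : HasSum (histWeight n c r) (psi (c + n * r) - psi c) :=
    (Nat.sigmaAntidiagonalTupleEquivTuple n).hasSum_iff.1 <|
      hasSum_sigma_of_nonneg (fun _ => histWeight_nonneg n hc hr.le _)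
        (fun k => Finset.hasSum _ _) hfib
  have hsupp : Function.support (histWeight n c r) ⊆ {h | h ≠ 0} := fun h hh h0 =>
    hh (by rw [h0]; exact histWeight_zero n c r)
  exact (hasSum_subtype_iff_of_support_subset hsupp).2 hall
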